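/- arXiv:2406.15070 — 3 statements merged into one kernel-verified Lean document; each statement's English description precedes it below -/
import Mathlib

section
/- Let p be a prime, let x_1, …, x_l be l distinct elements of 𝔽_p, let w_i, z_i ∈ 𝔽_p with w_i ≠ 0 for each i, and let π ∈ 𝔽_p[X] have degree < l. Set o_i = w_i·(π(x_i) + z_i) for each i. Suppose ö_1, …, ö_l ∈ 𝔽_p satisfy ö_j ≠ o_j for some index j, and let π' be the Lagrange interpolation polynomial through the pairs (x_i, w_i⁻¹·ö_i − z_i). Then the set {β ∈ 𝔽_p : π(β) = 0 and π'(β) = 0} has cardinality at most l − 1. In particular, if β is a root of π, then π'(β) = 0 only if β lies in a subset of 𝔽_p of size at most l − 1, so for β chosen uniformly at random and independently of the forgery, π'(β) = 0 with probability at most (l−1)/p. (Deterministic core of the Unforgeable Encrypted Polynomial with a Hidden Root theorem, Theorem 1.) -/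
open Polynomial

/-- Deterministic core of the Unforgeable Encrypted Polynomial
with a Hidden Root theorem: under the setup of Statement 13, the set of common
roots of `π` and the forged interpolated polynomial `π'` has cardinality at
most `l − 1`; hence for a uniformly random `β`, the probability that
`π'(β) = 0` while `π(β) = 0` is at most `(l−1)/p`. -/
theorem stmt_15 {p l : ℕ} [Fact p.Prime]
    (x : Fin l → ZMod p) (hx : Function.Injective x)
    (w z : Fin l → ZMod p) (hw : ∀ i, w i ≠ 0)
    (π : Polynomial (ZMod p)) (hπ : π.degree < l)
    (o o' : Fin l → ZMod p)
    (ho : ∀ i, o i = w i * (π.eval (x i) + z i))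
    (hforge : ∃ j, o' j ≠ o j) :
    {β : ZMod p | π.eval β = 0 ∧
        (Lagrange.interpolate Finset.univ x
          (fun i => (w i)⁻¹ * o' i - z i)).eval β = 0}.ncard ≤ l - 1 ∧
      (({β : ZMod p | π.eval β = 0 ∧
          (Lagrange.interpolate Finset.univ x
            (fun i => (w i)⁻¹ * o' i - z i)).eval β = 0}.ncard : ℝ) / p ≤
        ((l - 1 : ℕ) : ℝ) / p) := by
  obtain ⟨j, hj⟩ := hforge
  set π' := Lagrange.interpolate Finset.univ x (fun i => (w i)⁻¹ * o' i - z i) with hπ'def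
  have hxs : Set.InjOn x (Finset.univ : Finset (Fin l)) := hx.injOn
  have hd' : π'.degree < l := by
    have := Lagrange.degree_interpolate_lt (fun i => (w i)⁻¹ * o' i - z i) hxs
    simpa only [Finset.card_univ, Fintype.card_fin] using this
  have hne : π - π' ≠ 0 := by
    intro h
    have heq : π = π' := by linear_combination (norm := ring_nf) h
    have hval : π'.eval (x j) = (w j)⁻¹ * o' j - z j :=
      Lagrange.eval_interpolate_at_node _ hxs (Finset.mem_univ j)
    rw [← heq] at hval
    apply hj
    rw [ho j]
    have hwj := hw j
    field_simp at hval
    linear_combination -hval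
  have hdsub : (π - π').degree < l := lt_of_le_of_lt (degree_sub_le _ _) (max_lt hπ hd')
  have hnat : (π - π').natDegree ≤ l - 1 := by
    have h1 : (π - π').natDegree < l := (natDegree_lt_iff_degree_lt hne).2 (by exact_mod_cast hdsub)
    omega
  have hsub : {β : ZMod p | π.eval β = 0 ∧ π'.eval β = 0} ⊆ ↑((π - π').roots.toFinset) := by
    intro β hβ
    simp only [Multiset.mem_toFinset, mem_roots, hne, Finset.coe_sort_coe, ne_eq,
      not_false_eq_true, true_and, Finset.mem_coe]
    simp only [Set.mem_setOf_eq] at hβ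
    simp [IsRoot, hβ.1, hβ.2]
  have hcard : {β : ZMod p | π.eval β = 0 ∧ π'.eval β = 0}.ncard ≤ l - 1 := by
    calc {β : ZMod p | π.eval β = 0 ∧ π'.eval β = 0}.ncard
        ≤ (↑((π - π').roots.toFinset) : Set (ZMod p)).ncard :=
          Set.ncard_le_ncard hsub (Set.toFinite _)
      _ = (π - π').roots.toFinset.card := Set.ncard_coe_finset _
      _ ≤ (π - π').roots.card := Multiset.toFinset_card_le _
      _ ≤ (π - π').natDegree := by exact_mod_cast card_roots' _
      _ ≤ l - 1 := hnat
  refine ⟨hcard, ?_⟩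
  gcongr
end

section
/- Let p be a prime, let C be a finite set and I ⊆ C with |I| = ẗ, let t̄ = ẗ + 2, and let x_1, …, x_{t̄} be t̄ distinct elements of 𝔽_p. For each u ∈ C let m_u, q_u ∈ 𝔽_p and, for each i, let w_{i,u}, z_{i,u} ∈ 𝔽_p with w_{i,u} ≠ 0, and set π_{i,u} = x_i + m_u and o_{i,u} = w_{i,u}·(π_{i,u} + z_{i,u}). For each leader u ∈ I let root_u ∈ 𝔽_p with root_u ≠ 0, let w'_{i,u}, z'_{i,u} ∈ 𝔽_p with w'_{i,u} ≠ 0, and set γ_{i,u} = x_i − root_u. Let y_{i,u} ∈ 𝔽_p satisfy Σ_{u ∈ C} y_{i,u} = 0 for each i. Define Γ_i = ∏_{l ∈ I} γ_{i,l}·w'_{i,l}; d_{i,u} = q_u·Γ_i·((w_{i,u})⁻¹·o_{i,u} − z_{i,u}) + z'_{i,u} + y_{i,u} for u ∈ I and d_{i,u} = q_u·Γ_i·((w_{i,u})⁻¹·o_{i,u} − z_{i,u}) + y_{i,u} for u ∈ C \ I; g_i = Σ_{u ∈ C} d_{i,u}; θ_i = (∏_{u ∈ I} w'_{i,u})⁻¹·(g_i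 − Σ_{u ∈ I} z'_{i,u}); let θ be the Lagrange interpolation polynomial through (x_i, θ_i) for i = 1, …, t̄; and let res = θ(0)·(∏_{u ∈ I}(−root_u))⁻¹. Then res = Σ_{u ∈ C} q_u·m_u. (End-to-end completeness of Tempora-Fusion's homomorphic linear combination: the server's extracted result equals the linear combination of the clients' plaintext solutions.) -/
set_option linter.unnecessarySimpa false


open Polynomial

/-- End-to-end completeness of Tempora-Fusion's homomorphic
linear combination: the server's extracted result
`res = θ(0)·(∏_{u∈I}(−root_u))⁻¹` equals `Σ_{u∈C} q_u·m_u`. -/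
theorem stmt_16 {p : ℕ} [Fact p.Prime] {ι : Type*} [DecidableEq ι]
    (C I : Finset ι) (hIC : I ⊆ C)
    (x : Fin (I.card + 2) → ZMod p) (hx : Function.Injective x)
    (m q : ι → ZMod p)
    (w z : Fin (I.card + 2) → ι → ZMod p)
    (hw : ∀ i, ∀ u ∈ C, w i u ≠ 0)
    (root : ι → ZMod p) (hroot : ∀ u ∈ I, root u ≠ 0)
    (w' z' : Fin (I.card + 2) → ι → ZMod p)
    (hw' : ∀ i, ∀ u ∈ I, w' i u ≠ 0)
    (y : Fin (I.card + 2) → ι → ZMod p)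
    (hy : ∀ i, ∑ u ∈ C, y i u = 0)
    -- the client's encrypted y-coordinates (its puzzle)
    (o : Fin (I.card + 2) → ι → ZMod p)
    (ho : ∀ i u, o i u = w i u * ((x i + m u) + z i u))
    -- the common product of the leaders' encrypted root y-coordinates
    (Γ : Fin (I.card + 2) → ZMod p)
    (hΓ : ∀ i, Γ i = ∏ l ∈ I, (x i - root l) * w' i l)
    -- the OLE⁺ outputs received by the server
    (d : Fin (I.card + 2) → ι → ZMod p)
    (hdI : ∀ i, ∀ u ∈ I,
      d i u = q u * Γ i * ((w i u)⁻¹ * o i u - z i u) + z' i u + y i u)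
    (hdC : ∀ i, ∀ u ∈ C, u ∉ I →
      d i u = q u * Γ i * ((w i u)⁻¹ * o i u - z i u) + y i u)
    -- the server's aggregated encrypted y-coordinates
    (g : Fin (I.card + 2) → ZMod p)
    (hg : ∀ i, g i = ∑ u ∈ C, d i u)
    -- the unblinded y-coordinates
    (θv : Fin (I.card + 2) → ZMod p)
    (hθv : ∀ i, θv i = (∏ u ∈ I, w' i u)⁻¹ * (g i - ∑ u ∈ I, z' i u)) :
    (Lagrange.interpolate Finset.univ x θv).eval 0 * (∏ u ∈ I, -root u)⁻¹ =
      ∑ u ∈ C, q u * m u := by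
  -- The masked value recovered inside each OLE⁺
  have hmask : ∀ i, ∀ u ∈ C, (w i u)⁻¹ * o i u - z i u = x i + m u := by
    intro i u hu
    rw [ho, inv_mul_cancel_left₀ (hw i u hu)]
    ring
  -- Compute g
  have hgval : ∀ i, g i = Γ i * (∑ u ∈ C, q u * (x i + m u)) + ∑ u ∈ I, z' i u := by
    intro i
    rw [hg]
    have : ∀ u ∈ C, d i u = (q u * Γ i * (x i + m u) + y i u)
        + (if u ∈ I then z' i u else 0) := by
      intro u hu
      by_cases hI : u ∈ I
      · rw [if_pos hI, hdI i u hI, hmask i u hu]; ring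
      · rw [if_neg hI, hdC i u hu hI, hmask i u hu]; ring
    rw [Finset.sum_congr rfl this, Finset.sum_add_distrib, Finset.sum_add_distrib, hy,
      add_zero, Finset.sum_ite_mem, Finset.inter_eq_right.mpr hIC, Finset.mul_sum]
    congr 1
    exact Finset.sum_congr rfl fun u _ => by ring
  -- Compute θv
  have hθval : ∀ i, θv i = (∏ l ∈ I, (x i - root l)) * (∑ u ∈ C, q u * (x i + m u)) := by
    intro i
    have hW : (∏ u ∈ I, w' i u) ≠ 0 :=
      Finset.prod_ne_zero_iff.mpr fun u hu => hw' i u hu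
    rw [hθv, hgval, hΓ, Finset.prod_mul_distrib, add_sub_cancel_right]
    field_simp
  -- The polynomial through the points
  set P : (ZMod p)[X] :=
    (∏ l ∈ I, (X - Polynomial.C (root l))) * (∑ u ∈ C, Polynomial.C (q u) * (X + Polynomial.C (m u)))
    with hP
  have hPeval : ∀ i, P.eval (x i) = θv i := by
    intro i
    rw [hθval, hP]
    simp [eval_prod, eval_finset_sum]
  have hdeg : P.degree < (Finset.univ : Finset (Fin (I.card + 2))).card := by
    have hA : (∏ l ∈ I, (X - Polynomial.C (root l))).degree ≤ (I.card : WithBot ℕ) := by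
      calc (∏ l ∈ I, (X - Polynomial.C (root l))).degree
          ≤ ∑ l ∈ I, (X - Polynomial.C (root l)).degree := Polynomial.degree_prod_le _ _
        _ ≤ ∑ _l ∈ I, (1 : WithBot ℕ) := Finset.sum_le_sum (f := fun l => (X - Polynomial.C (root l)).degree) fun l _ => Polynomial.degree_X_sub_C_le _
        _ = (I.card : WithBot ℕ) := by simp
    have hB : (∑ u ∈ C, Polynomial.C (q u) * (X + Polynomial.C (m u))).degree ≤ 1 := by
      refine le_trans (Polynomial.degree_sum_le _ _) (Finset.sup_le fun u _ => ?_)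
      calc (Polynomial.C (q u) * (X + Polynomial.C (m u))).degree
          ≤ (Polynomial.C (q u)).degree + (X + Polynomial.C (m u)).degree :=
            Polynomial.degree_mul_le _ _
        _ ≤ 0 + 1 := add_le_add Polynomial.degree_C_le (by simpa using Polynomial.degree_add_le X (Polynomial.C (m u)))
        _ = 1 := by simp
    calc P.degree ≤ _ + _ := Polynomial.degree_mul_le _ _
      _ ≤ (I.card : WithBot ℕ) + 1 := add_le_add hA hB
      _ < ((Finset.univ : Finset (Fin (I.card + 2))).card : WithBot ℕ) := by
          rw [Finset.card_univ, Fintype.card_fin]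
          exact_mod_cast by omega
  have hinterp : Lagrange.interpolate Finset.univ x θv = P := by
    refine (Lagrange.eq_interpolate_of_eval_eq _ (Set.injOn_of_injective hx) hdeg ?_).symm
    intro i _; exact hPeval i
  rw [hinterp, hP]
  have hprod : (∏ u ∈ I, -root u) ≠ 0 :=
    Finset.prod_ne_zero_iff.mpr fun u hu => neg_ne_zero.mpr (hroot u hu)
  rw [eval_mul]
  have h1 : ((∏ l ∈ I, (X - Polynomial.C (root l))).eval 0) = ∏ u ∈ I, -root u := by
    simp [eval_prod]
  have h2 : ((∑ u ∈ C, Polynomial.C (q u) * (X + Polynomial.C (m u))).eval 0)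
      = ∑ u ∈ C, q u * m u := by
    simp [eval_finset_sum]
  rw [h1, h2, mul_comm, ← mul_assoc, inv_mul_cancel₀ hprod, one_mul]
end

section
/- Under the same honest-execution setup as the end-to-end completeness of Tempora-Fusion's homomorphic linear combination (clients C, leaders I with nonzero roots root_u, t̄ = |I| + 2 distinct points x_i, puzzles o_{i,u} = w_{i,u}·((x_i + m_u) + z_{i,u}) with w_{i,u} ≠ 0, re-encoded values d_{i,u} built with γ_{i,u} = x_i − root_u, w'_{i,u} ≠ 0, z'_{i,u}, and zero-sum y_{i,u}, aggregated into g_i, unblinded to θ_i = (∏_{u∈I} w'_{i,u})⁻¹·(g_i − Σ_{u∈I} z'_{i,u}), and θ the Lagrange interpolation polynomial through (x_i, θ_i)), the polynomial θ satisfies θ(root_u) = 0 for every u ∈ I. (Completeness of verification: every honest check of the leaders' inserted roots on the interpolated result polynomial passes.) -/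
open Polynomial

/-- Completeness of verification in Tempora-Fusion: under the
same honest-execution setup as the end-to-end completeness statement, the
interpolated result polynomial `θ` satisfies `θ(root_u) = 0` for every
leader `u ∈ I`. -/
theorem stmt_17 {p : ℕ} [Fact p.Prime] {ι : Type*} [DecidableEq ι]
    (C I : Finset ι) (hIC : I ⊆ C)
    (x : Fin (I.card + 2) → ZMod p) (hx : Function.Injective x)
    (m q : ι → ZMod p)
    (w z : Fin (I.card + 2) → ι → ZMod p)
    (hw : ∀ i, ∀ u ∈ C, w i u ≠ 0)
    (root : ι → ZMod p) (hroot : ∀ u ∈ I, root u ≠ 0)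
    (w' z' : Fin (I.card + 2) → ι → ZMod p)
    (hw' : ∀ i, ∀ u ∈ I, w' i u ≠ 0)
    (y : Fin (I.card + 2) → ι → ZMod p)
    (hy : ∀ i, ∑ u ∈ C, y i u = 0)
    -- the client's encrypted y-coordinates (its puzzle)
    (o : Fin (I.card + 2) → ι → ZMod p)
    (ho : ∀ i u, o i u = w i u * ((x i + m u) + z i u))
    -- the common product of the leaders' encrypted root y-coordinates
    (Γ : Fin (I.card + 2) → ZMod p)
    (hΓ : ∀ i, Γ i = ∏ l ∈ I, (x i - root l) * w' i l)
    -- the OLE⁺ outputs received by the server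
    (d : Fin (I.card + 2) → ι → ZMod p)
    (hdI : ∀ i, ∀ u ∈ I,
      d i u = q u * Γ i * ((w i u)⁻¹ * o i u - z i u) + z' i u + y i u)
    (hdC : ∀ i, ∀ u ∈ C, u ∉ I →
      d i u = q u * Γ i * ((w i u)⁻¹ * o i u - z i u) + y i u)
    -- the server's aggregated encrypted y-coordinates
    (g : Fin (I.card + 2) → ZMod p)
    (hg : ∀ i, g i = ∑ u ∈ C, d i u)
    -- the unblinded y-coordinates
    (θv : Fin (I.card + 2) → ZMod p)
    (hθv : ∀ i, θv i = (∏ u ∈ I, w' i u)⁻¹ * (g i - ∑ u ∈ I, z' i u)) :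
    ∀ u ∈ I, (Lagrange.interpolate Finset.univ x θv).eval (root u) = 0 := by
  set f : Polynomial (ZMod p) :=
    (∏ l ∈ I, (X - Polynomial.C (root l))) *
      (∑ u ∈ C, Polynomial.C (q u) * (X + Polynomial.C (m u))) with hf
  -- degree bound
  have hdeg : f.degree < (((Finset.univ : Finset (Fin (I.card + 2))).card : ℕ) : WithBot ℕ) := by
    have h1 : (∏ l ∈ I, (X - Polynomial.C (root l))).degree ≤ ((I.card : ℕ) : WithBot ℕ) := by
      apply le_trans (Polynomial.degree_prod_le _ _)
      simp [Polynomial.degree_X_sub_C]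
    have h2 : (∑ u ∈ C, Polynomial.C (q u) * (X + Polynomial.C (m u))).degree ≤ 1 := by
      apply le_trans (Polynomial.degree_sum_le _ _)
      apply Finset.sup_le
      intro u hu
      calc (Polynomial.C (q u) * (X + Polynomial.C (m u))).degree
          ≤ (Polynomial.C (q u)).degree + (X + Polynomial.C (m u)).degree :=
            Polynomial.degree_mul_le _ _
        _ ≤ 0 + 1 := add_le_add Polynomial.degree_C_le
            (by
              refine le_trans (Polynomial.degree_add_le _ _) (max_le ?_ ?_)
              · simp [Polynomial.degree_X]
              · exact le_trans Polynomial.degree_C_le (by norm_num))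
        _ = 1 := by norm_num
    have hle : f.degree ≤ ((I.card : ℕ) : WithBot ℕ) + 1 :=
      le_trans (Polynomial.degree_mul_le _ _) (add_le_add h1 h2)
    apply lt_of_le_of_lt hle
    simp only [Finset.card_univ, Fintype.card_fin]
    rw [← Nat.cast_one, ← Nat.cast_add]
    exact_mod_cast by omega
  -- evaluation agreement
  have key : ∀ i ∈ (Finset.univ : Finset (Fin (I.card + 2))), f.eval (x i) = θv i := by
    intro i _
    have hd' : ∀ u ∈ C, d i u =
        q u * Γ i * (x i + m u) + (if u ∈ I then z' i u else 0) + y i u := by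
      intro u hu
      have hwz : (w i u)⁻¹ * o i u - z i u = x i + m u := by
        rw [ho, inv_mul_cancel_left₀ (hw i u hu)]; ring
      by_cases h : u ∈ I
      · rw [hdI i u h, hwz]; simp [h]
      · rw [hdC i u hu h, hwz]; simp [h]
    have hgsum : g i = Γ i * (∑ u ∈ C, q u * (x i + m u)) + ∑ u ∈ I, z' i u := by
      rw [hg, Finset.sum_congr rfl hd']
      rw [Finset.sum_add_distrib, Finset.sum_add_distrib, hy, add_zero,
        Finset.sum_ite_mem, Finset.inter_eq_right.mpr hIC, Finset.mul_sum]
      congr 1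
      exact Finset.sum_congr rfl fun u _ => by ring
    have hΓsplit : Γ i = (∏ l ∈ I, (x i - root l)) * ∏ l ∈ I, w' i l := by
      rw [hΓ, Finset.prod_mul_distrib]
    have hwne : (∏ u ∈ I, w' i u) ≠ 0 :=
      Finset.prod_ne_zero_iff.mpr fun u hu => hw' i u hu
    have : θv i = (∏ l ∈ I, (x i - root l)) * ∑ u ∈ C, q u * (x i + m u) := by
      rw [hθv, hgsum, add_sub_cancel_right, hΓsplit]
      field_simp
    rw [this, hf]
    simp [Polynomial.eval_prod, Polynomial.eval_finset_sum]
  have hinterp : Lagrange.interpolate Finset.univ x θv = f :=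
    (Lagrange.eq_interpolate_of_eval_eq _ (hx.injOn) hdeg key).symm
  intro u hu
  rw [hinterp, hf, Polynomial.eval_mul, Polynomial.eval_prod,
    Finset.prod_eq_zero hu (by simp), zero_mul]
end
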